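/- Given d, y = ak, z = bk with gcd(a,b)=1, ed = 2gabk+1, p = 2ga+1, q = 2gb+1, one recovers the factorization: setting k = gcd(y,z), a = y/k, b = z/k, g = (ed-1)/(2abk), one has p·q = N, p = 2ga+1 and q = 2gb+1. -/
import Mathlib


theorem factorization_recovery (g a b e d k p q N y z : ℕ)
    (hg : 0 < g) (ha : 0 < a) (hb : 0 < b) (he : 0 < e) (hd : 0 < d) (hk : 0 < k)
    (hab : Nat.gcd a b = 1) (hkey : e * d = 2 * g * a * b * k + 1)
    (hp : p = 2 * g * a + 1) (hq : q = 2 * g * b + 1) (hN : N = p * q)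
    (hy : y = a * k) (hz : z = b * k) :
    let k' := Nat.gcd y z
    let a' := y / k'
    let b' := z / k'
    let g' := (e * d - 1) / (2 * a' * b' * k')
    p * q = N ∧ p = 2 * g' * a' + 1 ∧ q = 2 * g' * b' + 1 := by
  intro k' a' b' g'
  have hk' : k' = k := by
    simp only [k', hy, hz, Nat.gcd_mul_right, hab, one_mul]
  have ha' : a' = a := by
    simp [a', hk', hy, Nat.mul_div_cancel _ hk]
  have hb' : b' = b := by
    simp [b', hk', hz, Nat.mul_div_cancel _ hk]
  have hg' : g' = g := by
    simp only [g', ha', hb', hk', hkey, Nat.add_sub_cancel]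
    have : 2 * g * a * b * k = g * (2 * a * b * k) := by ring
    rw [this, Nat.mul_div_cancel]
    positivity
  exact ⟨hN.symm, by rw [hg', ha', hp], by rw [hg', hb', hq]⟩
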